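/- arXiv:1902.10468 — 2 statements merged into one kernel-verified Lean document; each statement's English description precedes it below -/
import Mathlib

section
/- For all integers n ≥ 0 and k ≥ 1, the determinant of the n×n matrix over ℚ(q) with entries c(i+k+1, j+k), 0 ≤ i, j ≤ n-1, equals ([k]/[2n+k])·[2n+k choose n]·( (-q^{n+1}; q)_{k-1} / (-q; q)_{k-1} ), where c(a, b) = q^{(a-b)(a-b-1)} · ( (-q^{b}; q)_{a-b} / (-q; q)_{a-b} ) · [b choose a-b] for 0 ≤ a-b ≤ b, and c(a, b) = 0 when a-b < 0 (so the (i,j) entry is q^{(i-j+1)(i-j)} · ( (-q^{j+k}; q)_{i-j+1} / (-q; q)_{i-j+1} ) · [j+k choose i-j+1] for j ≤ i+1 and 0 for j > i+1). -/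
/-- The indeterminate `q` in the field `ℚ(q)` of rational functions. -/
noncomputable def qq : RatFunc ℚ := RatFunc.X

/-- The `q`-integer `[n] = 1 + q + ⋯ + q^{n-1}`. -/
noncomputable def qInt (n : ℕ) : RatFunc ℚ := ∑ i ∈ Finset.range n, qq ^ i

/-- The `q`-factorial `[n]! = [1][2]⋯[n]`. -/
noncomputable def qFact (n : ℕ) : RatFunc ℚ := ∏ i ∈ Finset.range n, qInt (i + 1)

/-- The Gaussian `q`-binomial coefficient `[a choose b] = [a]!/([b]![a-b]!)` for `b ≤ a`,
and `0` for `b > a`. -/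
noncomputable def qChoose (a b : ℕ) : RatFunc ℚ :=
  if b ≤ a then qFact a / (qFact b * qFact (a - b)) else 0

/-- The `q`-Pochhammer symbol `(a; q)_n = (1-a)(1-aq)⋯(1-aq^{n-1})`. -/
noncomputable def qPoch (a : RatFunc ℚ) (n : ℕ) : RatFunc ℚ :=
  ∏ i ∈ Finset.range n, (1 - a * qq ^ i)

/-! The matrix `(c(i+k+1, j+k))` is lower Hessenberg with ones on the superdiagonal
(`c(a, a) = 1`, `c(a, b) = 0` for `a < b`), so expanding along the first row leaves two minors:
the same kind of matrix with `k` replaced by `k + 1`, and one whose first column is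
`(c(i+k+2, k))`. Hence the statement is generalised to matrices `(c(i+K+1, j+K))` whose first
column is replaced by `(c(i+K+1, k))`, with an explicit product formula for their determinants.
First-row expansion turns this into a recursion in the size, which, after cancelling the common
`q`-Pochhammer factors, is the identity
`(1 - q^(a+c))(1 - q^(a+d)) = (1 - q^a)(1 - q^(a+c+d)) + q^a (1 - q^c)(1 - q^d)`. -/

open Finset Polynomial

noncomputable def qMinus (a : ℕ) : RatFunc ℚ := 1 - qq ^ a

noncomputable def qPlus (a : ℕ) : RatFunc ℚ := 1 + qq ^ a

/- `qMinusProd s t = (q^s; q)_t` and `qPlusProd s t = (-q^s; q)_t`. Keeping the factors `1 ∓ q^a`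
as atoms keeps the `field_simp`/`ring` normalisations below small. -/
noncomputable def qMinusProd (s t : ℕ) : RatFunc ℚ := ∏ i ∈ range t, qMinus (s + i)

noncomputable def qPlusProd (s t : ℕ) : RatFunc ℚ := ∏ i ∈ range t, qPlus (s + i)

lemma qMinus_ne_zero {a : ℕ} (ha : 0 < a) : qMinus a ≠ 0 := by
  have h : qMinus a = -algebraMap ℚ[X] (RatFunc ℚ) (X ^ a - C 1) := by
    simp [qMinus, qq, RatFunc.algebraMap_X]
  rw [h, neg_ne_zero]
  exact RatFunc.algebraMap_ne_zero (X_pow_sub_C_ne_zero ha 1)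

lemma qPlus_ne_zero (a : ℕ) : qPlus a ≠ 0 := by
  rcases Nat.eq_zero_or_pos a with rfl | ha
  · norm_num [qPlus]
  · have h : qPlus a = algebraMap ℚ[X] (RatFunc ℚ) (X ^ a + C 1) := by
      simp [qPlus, qq, RatFunc.algebraMap_X, add_comm]
    rw [h]
    exact RatFunc.algebraMap_ne_zero (X_pow_add_C_ne_zero ha 1)

lemma qMinus_two_mul (a : ℕ) : qMinus (2 * a) = qMinus a * qPlus a := by
  simp only [qMinus, qPlus, two_mul, pow_add]; ring

lemma qMinus_one_mul_qInt (m : ℕ) : qMinus 1 * qInt m = qMinus m := by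
  rw [qMinus, qMinus, qInt, pow_one, ← neg_sub, neg_mul, mul_comm, geom_sum_mul, neg_sub]

lemma qInt_ne_zero {m : ℕ} (hm : 0 < m) : qInt m ≠ 0 :=
  right_ne_zero_of_mul (by rw [qMinus_one_mul_qInt]; exact qMinus_ne_zero hm)

lemma qInt_div_qInt (a : ℕ) {b : ℕ} (hb : 0 < b) : qInt a / qInt b = qMinus a / qMinus b := by
  rw [div_eq_div_iff (qInt_ne_zero hb) (qMinus_ne_zero hb), ← qMinus_one_mul_qInt a,
    ← qMinus_one_mul_qInt b]
  ring

lemma qMinusProd_ne_zero {s : ℕ} (hs : 0 < s) (t : ℕ) : qMinusProd s t ≠ 0 :=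
  prod_ne_zero_iff.mpr fun _ _ => qMinus_ne_zero (by omega)

lemma qPlusProd_ne_zero (s t : ℕ) : qPlusProd s t ≠ 0 :=
  prod_ne_zero_iff.mpr fun _ _ => qPlus_ne_zero _

lemma qMinusProd_zero (s : ℕ) : qMinusProd s 0 = 1 := prod_range_zero _

lemma qPlusProd_zero (s : ℕ) : qPlusProd s 0 = 1 := prod_range_zero _

lemma qMinusProd_add (s a b : ℕ) :
    qMinusProd s (a + b) = qMinusProd s a * qMinusProd (s + a) b := by
  simp only [qMinusProd, prod_range_add, add_assoc]

lemma qPlusProd_add (s a b : ℕ) : qPlusProd s (a + b) = qPlusProd s a * qPlusProd (s + a) b := by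
  simp only [qPlusProd, prod_range_add, add_assoc]

lemma qMinusProd_split {s a b s' t : ℕ} (hs : s + a = s') (ht : a + b = t) :
    qMinusProd s t = qMinusProd s a * qMinusProd s' b := by
  subst hs ht; exact qMinusProd_add s a b

lemma qPlusProd_split {s a b s' t : ℕ} (hs : s + a = s') (ht : a + b = t) :
    qPlusProd s t = qPlusProd s a * qPlusProd s' b := by
  subst hs ht; exact qPlusProd_add s a b

lemma qMinusProd_one (s : ℕ) : qMinusProd s 1 = qMinus s := by simp [qMinusProd]

lemma qPlusProd_one (s : ℕ) : qPlusProd s 1 = qPlus s := by simp [qPlusProd]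

lemma qMinusProd_succ (s t : ℕ) : qMinusProd s (t + 1) = qMinusProd s t * qMinus (s + t) :=
  prod_range_succ _ _

lemma qPlusProd_succ (s t : ℕ) : qPlusProd s (t + 1) = qPlusProd s t * qPlus (s + t) :=
  prod_range_succ _ _

lemma qMinusProd_succ' (s t : ℕ) : qMinusProd s (t + 1) = qMinus s * qMinusProd (s + 1) t := by
  simp only [qMinusProd, prod_range_succ', add_zero, add_assoc, add_comm 1, mul_comm]

lemma qPlusProd_succ' (s t : ℕ) : qPlusProd s (t + 1) = qPlus s * qPlusProd (s + 1) t := by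
  simp only [qPlusProd, prod_range_succ', add_zero, add_assoc, add_comm 1, mul_comm]

lemma qPoch_neg_qq_pow (s t : ℕ) : qPoch (-qq ^ s) t = qPlusProd s t :=
  prod_congr rfl fun i _ => by rw [qPlus, pow_add]; ring

lemma qPoch_neg_qq (t : ℕ) : qPoch (-qq) t = qPlusProd 1 t := by
  rw [← qPoch_neg_qq_pow, pow_one]

lemma qMinus_one_pow_mul_qFact (m : ℕ) : qMinus 1 ^ m * qFact m = qMinusProd 1 m := by
  induction m with
  | zero => simp [qFact, qMinusProd]
  | succ m ih =>
    rw [qFact, prod_range_succ, ← qFact, qMinusProd_succ, ← ih, add_comm 1 m,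
      ← qMinus_one_mul_qInt (m + 1)]
    ring

lemma qChoose_eq {a b : ℕ} (h : b ≤ a) :
    qChoose a b = qMinusProd (a - b + 1) b / qMinusProd 1 b := by
  have hfact : ∀ m, qFact m ≠ 0 := fun m =>
    prod_ne_zero_iff.mpr fun _ _ => qInt_ne_zero (Nat.succ_pos _)
  have hsplit : qMinusProd 1 a = qMinusProd 1 (a - b) * qMinusProd (a - b + 1) b :=
    qMinusProd_split (add_comm _ _) (Nat.sub_add_cancel h)
  rw [qChoose, if_pos h, div_eq_div_iff (mul_ne_zero (hfact b) (hfact (a - b)))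
    (qMinusProd_ne_zero one_pos b)]
  refine mul_left_cancel₀ (pow_ne_zero a (qMinus_ne_zero one_pos)) ?_
  calc qMinus 1 ^ a * (qFact a * qMinusProd 1 b)
      = qMinusProd 1 a * qMinusProd 1 b := by rw [← qMinus_one_pow_mul_qFact a]; ring
    _ = qMinus 1 ^ (b + (a - b)) * (qMinusProd (a - b + 1) b * (qFact b * qFact (a - b))) := by
        rw [hsplit, pow_add, ← qMinus_one_pow_mul_qFact b, ← qMinus_one_pow_mul_qFact (a - b)]
        ring
    _ = _ := by rw [Nat.add_sub_cancel' h]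

lemma qChoose_zero (a : ℕ) : qChoose a 0 = 1 := by
  rw [qChoose_eq (Nat.zero_le a), qMinusProd_zero, qMinusProd_zero, div_one]

noncomputable def coeffC (a b : ℕ) : RatFunc ℚ :=
  if b ≤ a then
    qq ^ ((a - b) * (a - b - 1)) * (qPoch (-qq ^ b) (a - b) / qPoch (-qq) (a - b)) *
      qChoose b (a - b)
  else 0

lemma coeffC_self (a : ℕ) : coeffC a a = 1 := by
  simp [coeffC, qPoch, qChoose_zero]

lemma coeffC_of_lt {a b : ℕ} (h : a < b) : coeffC a b = 0 :=
  if_neg (by omega)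

lemma coeffC_add_add_one {k M : ℕ} (h : M + 1 ≤ k) :
    coeffC (k + M + 1) k = qq ^ (M * (M + 1)) * (qPlusProd k (M + 1) / qPlusProd 1 (M + 1)) *
      (qMinusProd (k - M) (M + 1) / qMinusProd 1 (M + 1)) := by
  rw [coeffC, if_pos (by omega), show k + M + 1 - k = M + 1 by omega, Nat.add_sub_cancel,
    qPoch_neg_qq_pow, qPoch_neg_qq, qChoose_eq h, show k - (M + 1) + 1 = k - M by omega,
    mul_comm (M + 1)]

lemma coeffC_add_add_one_of_le {k M : ℕ} (h : k ≤ M) : coeffC (k + M + 1) k = 0 := by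
  rw [coeffC, if_pos (by omega), qChoose, if_neg (by omega), mul_zero]

noncomputable def detValue (n k : ℕ) : RatFunc ℚ :=
  (qInt k / qInt (2 * n + k)) * qChoose (2 * n + k) n *
    (qPoch (-qq ^ (n + 1)) (k - 1) / qPoch (-qq) (k - 1))

lemma detValue_eq (n : ℕ) {k : ℕ} (hk : 0 < k) :
    detValue n k = (qMinus k / qMinus (2 * n + k)) * (qMinusProd (n + k + 1) n / qMinusProd 1 n) *
      (qPlusProd (n + 1) (k - 1) / qPlusProd 1 (k - 1)) := by
  rw [detValue, qInt_div_qInt _ (by omega), qChoose_eq (by omega),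
    show 2 * n + k - n + 1 = n + k + 1 by omega, qPoch_neg_qq_pow, qPoch_neg_qq]

lemma detValue_zero_left {k : ℕ} (hk : 0 < k) : detValue 0 k = 1 := by
  rw [detValue_eq 0 hk, mul_zero, zero_add, zero_add, div_self (qMinus_ne_zero hk),
    qMinusProd_zero, qMinusProd_zero, div_self (qPlusProd_ne_zero _ _)]
  norm_num

/- The determinant of `borderedMatrix (n - M) (k + M) k`, see `det_borderedMatrix`. -/
noncomputable def borderedDetValue (n k M : ℕ) : RatFunc ℚ :=
  qq ^ (M * (M + 1)) * detValue n k *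
    (qMinusProd (k - M) M * qMinusProd (n - M) M * qPlusProd (n - M) M) /
    (qMinusProd 1 M * qPlusProd 1 M * qMinusProd (2 * n + k - M) M)

lemma borderedDetValue_zero (n k : ℕ) : borderedDetValue n k 0 = detValue n k := by
  simp [borderedDetValue, qMinusProd_zero, qPlusProd_zero]

lemma borderedDetValue_of_le {n k M : ℕ} (hk : 0 < k) (h : k ≤ M) :
    borderedDetValue n k M = 0 := by
  have hzero : qMinusProd (k - M) M = 0 := by
    obtain ⟨M', rfl⟩ := Nat.exists_eq_add_one_of_ne_zero (by omega : M ≠ 0)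
    rw [qMinusProd_succ', Nat.sub_eq_zero_of_le h, qMinus, pow_zero, sub_self, zero_mul]
  rw [borderedDetValue, hzero, zero_mul, zero_mul, mul_zero, zero_div]

lemma coeffC_eq_borderedDetValue {k : ℕ} (M : ℕ) (hk : 0 < k) :
    coeffC (k + M + 1) k = borderedDetValue (M + 1) k M := by
  by_cases hMk : M + 1 ≤ k
  swap
  · rw [coeffC_add_add_one_of_le (by omega), borderedDetValue_of_le hk (by omega)]
  rw [coeffC_add_add_one hMk, borderedDetValue, detValue_eq (M + 1) hk,
    show M + 1 - M = 1 by omega, show 2 * (M + 1) + k - M = M + k + 2 by omega,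
    show M + 1 + k + 1 = M + k + 2 by omega, show 2 * (M + 1) + k = M + k + 2 + M by omega]
  have hleft : qMinusProd (k - M) (M + 1) = qMinusProd (k - M) M * qMinus k := by
    rw [qMinusProd_split (a := M) (s' := k) (by omega) rfl, qMinusProd_one]
  have hplus : qPlusProd 1 (M + 1) * qPlusProd (M + 1 + 1) (k - 1) =
      qPlusProd 1 (k - 1) * qPlusProd k (M + 1) :=
    (qPlusProd_split (t := M + k) (by omega) (by omega)).symm.trans
      (qPlusProd_split (by omega) (by omega))
  have := qMinus_ne_zero (by omega : 0 < M + k + 2 + M)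
  have := qMinusProd_ne_zero one_pos (M + 1)
  have := qPlusProd_ne_zero 1 (M + 1)
  have := qPlusProd_ne_zero 1 (k - 1)
  have := qMinusProd_ne_zero one_pos M
  have := qPlusProd_ne_zero 1 M
  have := qMinusProd_ne_zero (by omega : 0 < M + k + 2) M
  rw [hleft, qMinusProd_succ (M + k + 2)]
  field_simp
  linear_combination (-(qq ^ (M * (M + 1))) * qMinusProd (k - M) M * qMinus k) * hplus

lemma qMinusProd_sub_succ {s M : ℕ} (h : M < s) :
    qMinusProd (s - (M + 1)) (M + 1) = qMinus (s - M - 1) * qMinusProd (s - M) M := by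
  rw [qMinusProd_succ', Nat.sub_sub, show s - (M + 1) + 1 = s - M by omega]

lemma qPlusProd_sub_succ {s M : ℕ} (h : M < s) :
    qPlusProd (s - (M + 1)) (M + 1) = qPlus (s - M - 1) * qPlusProd (s - M) M := by
  rw [qPlusProd_succ', Nat.sub_sub, show s - (M + 1) + 1 = s - M by omega]

lemma borderedDetValue_succ {n k M : ℕ} (hk : M + 1 ≤ k) (hn : M + 2 ≤ n) :
    qMinus (2 * M + 2) * qMinus (2 * n + k - M - 1) * borderedDetValue n k (M + 1) =
      qq ^ (2 * M + 2) * qMinus (k - M - 1) * qMinus (2 * n - 2 * M - 2) *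
        borderedDetValue n k M := by
  have hpow : qq ^ ((M + 1) * (M + 1 + 1)) = qq ^ (M * (M + 1)) * qq ^ (2 * M + 2) := by
    rw [← pow_add]; ring_nf
  have hM : qMinus (2 * M + 2) = qMinus (M + 1) * qPlus (M + 1) := by
    rw [← qMinus_two_mul, mul_add_one]
  have hn' : qMinus (2 * n - 2 * M - 2) = qMinus (n - M - 1) * qPlus (n - M - 1) := by
    rw [← qMinus_two_mul, show 2 * (n - M - 1) = 2 * n - 2 * M - 2 by omega]
  rw [borderedDetValue, borderedDetValue, qMinusProd_sub_succ (by omega : M < k),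
    qMinusProd_sub_succ (by omega : M < n), qPlusProd_sub_succ (by omega : M < n),
    qMinusProd_sub_succ (by omega : M < 2 * n + k), hM, hn', qMinusProd_succ, qPlusProd_succ,
    hpow, add_comm 1 M]
  have := qMinusProd_ne_zero one_pos M
  have := qPlusProd_ne_zero 1 M
  have := qMinusProd_ne_zero (by omega : 0 < 2 * n + k - M) M
  have := qMinus_ne_zero (by omega : 0 < M + 1)
  have := qPlus_ne_zero (M + 1)
  have := qMinus_ne_zero (by omega : 0 < 2 * n + k - M - 1)
  rw [mul_div_assoc', mul_div_assoc', div_eq_div_iff (by positivity) (by positivity)]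
  ring

lemma qMinus_add_mul_qMinus_add (a c d : ℕ) :
    qMinus (a + c) * qMinus (a + d) =
      qMinus a * qMinus (a + c + d) + qq ^ a * qMinus c * qMinus d := by
  simp only [qMinus, pow_add]
  ring

lemma detValue_sub_sub_one_add_add_one {n M : ℕ} (k : ℕ) (hn : M + 1 ≤ n) :
    detValue (n - M - 1) (k + M + 1) =
      (qMinus (k + M + 1) / qMinus (2 * n + k - M - 1)) *
        (qMinusProd (n + k + 1) (n - M - 1) / qMinusProd 1 (n - M - 1)) *
        (qPlusProd (n - M) (k + M) / qPlusProd 1 (k + M)) := by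
  rw [detValue_eq _ (by omega), show 2 * (n - M - 1) + (k + M + 1) = 2 * n + k - M - 1 by omega,
    show n - M - 1 + (k + M + 1) + 1 = n + k + 1 by omega, show n - M - 1 + 1 = n - M by omega,
    Nat.add_sub_cancel]

lemma coeffC_mul_detValue {n k M : ℕ} (hk : M + 1 ≤ k) (hn : M + 2 ≤ n) :
    qMinus (2 * M + 2) * qMinus (2 * n + k - M - 1) *
        (coeffC (k + M + 1) k * detValue (n - M - 1) (k + M + 1)) =
      qMinus (k + M + 1) * qMinus (2 * n) * borderedDetValue n k M := by
  have hk' : qMinusProd (k - M) (M + 1) = qMinusProd (k - M) M * qMinus k := by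
    rw [qMinusProd_split (a := M) (s' := k) (by omega) rfl, qMinusProd_one]
  have hnk : qMinusProd (n + k + 1) n = qMinusProd (n + k + 1) (n - M - 1) *
      (qMinusProd (2 * n + k - M) M * qMinus (2 * n + k)) := by
    rw [qMinusProd_split (a := n - M - 1) (b := M + 1) (s' := 2 * n + k - M) (by omega)
        (by omega),
      qMinusProd_split (a := M) (b := 1) (s' := 2 * n + k) (by omega) rfl, qMinusProd_one]
  have hplus : qPlusProd (n - M) (k + M) =
      qPlusProd (n - M) M * (qPlus n * qPlusProd (n + 1) (k - 1)) := by
    rw [qPlusProd_split (a := M) (b := k) (s' := n) (by omega) (by omega),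
      qPlusProd_split (s := n) (a := 1) (b := k - 1) rfl (by omega), qPlusProd_one]
  have hplus1 : qPlusProd 1 (k + M) = qPlusProd 1 (k - 1) * qPlusProd k (M + 1) :=
    qPlusProd_split (by omega) (by omega)
  have hn1 : qMinusProd 1 n = qMinusProd 1 (n - M - 1) * (qMinusProd (n - M) M * qMinus n) := by
    rw [qMinusProd_split (a := n - M - 1) (b := M + 1) (s' := n - M) (by omega) (by omega),
      qMinusProd_split (a := M) (b := 1) (s' := n) (by omega) rfl, qMinusProd_one]
  have hM : qMinus (2 * M + 2) = qMinus (M + 1) * qPlus (M + 1) := by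
    rw [← qMinus_two_mul, mul_add_one]
  rw [borderedDetValue, coeffC_add_add_one hk,
    detValue_sub_sub_one_add_add_one k (by omega : M + 1 ≤ n), detValue_eq n (by omega), hk', hnk,
    hplus, hplus1, hn1, qMinus_two_mul n, hM, qMinusProd_succ 1 M, qPlusProd_succ 1 M, add_comm 1 M]
  have := qMinus_ne_zero (by omega : 0 < 2 * n + k)
  have := qMinus_ne_zero (by omega : 0 < n)
  have := qMinus_ne_zero (by omega : 0 < M + 1)
  have := qMinus_ne_zero (by omega : 0 < 2 * n + k - M - 1)
  have := qMinusProd_ne_zero one_pos (n - M - 1)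
  have := qMinusProd_ne_zero (by omega : 0 < n - M) M
  have := qMinusProd_ne_zero one_pos M
  have := qMinusProd_ne_zero (by omega : 0 < 2 * n + k - M) M
  have := qMinusProd_ne_zero (by omega : 0 < n + k + 1) (n - M - 1)
  have := qMinusProd_ne_zero (by omega : 0 < k - M) M
  have := qPlusProd_ne_zero k (M + 1)
  have := qPlusProd_ne_zero 1 (k - 1)
  have := qPlusProd_ne_zero 1 M
  have := qPlusProd_ne_zero (n - M) M
  have := qPlus_ne_zero (M + 1)
  have := qPlus_ne_zero n
  field_simp

lemma borderedDetValue_add_succ {n k M : ℕ} (hk : 0 < k) (hn : M + 2 ≤ n) :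
    borderedDetValue n k M + borderedDetValue n k (M + 1) =
      coeffC (k + M + 1) k * detValue (n - M - 1) (k + M + 1) := by
  by_cases hMk : M + 1 ≤ k
  swap
  · rw [borderedDetValue_of_le hk (by omega), borderedDetValue_of_le hk (by omega),
      coeffC_add_add_one_of_le (by omega), zero_mul, add_zero]
  have h₁ := qMinus_ne_zero (by omega : 0 < 2 * M + 2)
  have h₂ := qMinus_ne_zero (by omega : 0 < 2 * n + k - M - 1)
  have hid := qMinus_add_mul_qMinus_add (2 * M + 2) (k - M - 1) (2 * n - 2 * M - 2)
  rw [show 2 * M + 2 + (k - M - 1) + (2 * n - 2 * M - 2) = 2 * n + k - M - 1 by omega,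
    show 2 * M + 2 + (k - M - 1) = k + M + 1 by omega,
    show 2 * M + 2 + (2 * n - 2 * M - 2) = 2 * n by omega] at hid
  refine mul_left_cancel₀ (mul_ne_zero h₁ h₂) ?_
  linear_combination borderedDetValue_succ hMk hn -
    borderedDetValue n k M * hid - coeffC_mul_detValue hMk hn

lemma det_of_row_zero_eq_zero_of_two_le {R : Type*} [CommRing R] {N : ℕ}
    (A : Matrix (Fin (N + 2)) (Fin (N + 2)) R) (hA : ∀ j : Fin N, A 0 j.succ.succ = 0) :
    A.det = A 0 0 * (A.submatrix Fin.succ Fin.succ).det -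
      A 0 1 * (A.submatrix Fin.succ (Fin.succAbove 1)).det := by
  rw [Matrix.det_succ_row_zero, Fin.sum_univ_succ, Fin.sum_univ_succ]
  simp [hA, Fin.succ_zero_eq_one, sub_eq_add_neg]

noncomputable def borderedMatrix (N K k : ℕ) : Matrix (Fin N) (Fin N) (RatFunc ℚ) :=
  Matrix.of fun i j => coeffC (i + K + 1) (if (j : ℕ) = 0 then k else j + K)

lemma borderedMatrix_self (N k : ℕ) :
    borderedMatrix N k k = Matrix.of fun i j : Fin N => coeffC (i + k + 1) (j + k) := by
  ext i j
  by_cases hj : (j : ℕ) = 0 <;> simp [borderedMatrix, hj]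

lemma borderedMatrix_submatrix_succ_succ (N K k : ℕ) :
    (borderedMatrix (N + 1) K k).submatrix Fin.succ Fin.succ =
      borderedMatrix N (K + 1) (K + 1) := by
  rw [borderedMatrix_self]
  ext i j
  simp only [borderedMatrix, Matrix.submatrix_apply, Matrix.of_apply, Fin.val_succ,
    Nat.add_one_ne_zero, if_false]
  congr 1 <;> omega

lemma borderedMatrix_submatrix_succ_succAbove_one (N K k : ℕ) :
    (borderedMatrix (N + 2) K k).submatrix Fin.succ (Fin.succAbove 1) =
      borderedMatrix (N + 1) (K + 1) k := by
  ext i j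
  cases j using Fin.cases with
  | zero =>
    simp only [borderedMatrix, Matrix.submatrix_apply, Matrix.of_apply, Fin.val_succ,
      Fin.one_succAbove_zero, Fin.val_zero, if_true]
    congr 1; omega
  | succ j => simp [borderedMatrix, Fin.one_succAbove_succ]; congr 1 <;> omega

lemma det_borderedMatrix (N M : ℕ) {k : ℕ} (hk : 0 < k) :
    (borderedMatrix (N + 1) (k + M) k).det = borderedDetValue (N + 1 + M) k M := by
  induction N generalizing k M with
  | zero => simp [borderedMatrix, coeffC_eq_borderedDetValue M hk, add_comm 1 M]
  | succ N ih =>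
    have hrow : ∀ j : Fin N, borderedMatrix (N + 2) (k + M) k 0 j.succ.succ = 0 := fun j =>
      coeffC_of_lt (by simp; omega)
    have hrec := borderedDetValue_add_succ hk (by omega : M + 2 ≤ N + 1 + 1 + M)
    rw [show N + 1 + 1 + M - M - 1 = N + 1 by omega] at hrec
    rw [det_of_row_zero_eq_zero_of_two_le _ hrow, borderedMatrix_submatrix_succ_succ,
      borderedMatrix_submatrix_succ_succAbove_one, ih 0 (by omega), add_assoc k M 1,
      ih (M + 1) hk, borderedDetValue_zero]
    simp only [borderedMatrix, Matrix.of_apply, Fin.val_zero, Fin.val_one, if_true, one_ne_zero,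
      if_false, zero_add, add_comm 1 (k + M), coeffC_self, add_zero]
    rw [show k + (M + 1) = k + M + 1 from rfl, ← hrec,
      show N + 1 + (M + 1) = N + 1 + 1 + M by omega]
    ring

lemma det_coeffC (n : ℕ) {k : ℕ} (hk : 0 < k) :
    (Matrix.of fun i j : Fin n => coeffC (i + k + 1) (j + k)).det = detValue n k := by
  rw [← borderedMatrix_self]
  rcases n with _ | N
  · rw [Matrix.det_fin_zero, detValue_zero_left hk]
  · exact (det_borderedMatrix N 0 hk).trans (borderedDetValue_zero _ _)

lemma toNat_sub_add_one_mul_sub {i j : ℕ} (h : j ≤ i + 1) :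
    (((i : ℤ) - j + 1) * ((i : ℤ) - j)).toNat = (i + 1 - j) * (i + 1 - j - 1) := by
  rcases Nat.lt_or_ge i j with hij | hij
  · obtain rfl : j = i + 1 := by omega
    simp
  · obtain ⟨e, rfl⟩ := Nat.exists_eq_add_of_le hij
    have hcast : (((j + e : ℕ) : ℤ) - j + 1) * (((j + e : ℕ) : ℤ) - j) =
        (((e + 1) * e : ℕ) : ℤ) := by
      push_cast; ring
    rw [show j + e + 1 - j = e + 1 by omega, Nat.add_sub_cancel, hcast, Int.toNat_natCast]

theorem stmt_16 (n k : ℕ) (hk : 1 ≤ k) :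
    Matrix.det (Matrix.of fun i j : Fin n =>
        if (j : ℕ) ≤ (i : ℕ) + 1 then
          qq ^ ((((i : ℕ) : ℤ) - ((j : ℕ) : ℤ) + 1) * (((i : ℕ) : ℤ) - ((j : ℕ) : ℤ))).toNat *
            (qPoch (-qq ^ ((j : ℕ) + k)) ((i : ℕ) + 1 - (j : ℕ)) /
              qPoch (-qq) ((i : ℕ) + 1 - (j : ℕ))) *
            qChoose ((j : ℕ) + k) ((i : ℕ) + 1 - (j : ℕ))
        else 0)
      = (qInt k / qInt (2 * n + k)) * qChoose (2 * n + k) n *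
          (qPoch (-qq ^ (n + 1)) (k - 1) / qPoch (-qq) (k - 1)) := by
  change _ = detValue n k
  convert det_coeffC n hk using 2
  ext i j
  rw [Matrix.of_apply, Matrix.of_apply]
  by_cases h : (j : ℕ) ≤ i + 1
  · rw [if_pos h, coeffC, if_pos (by omega), show (i : ℕ) + k + 1 - (j + k) = i + 1 - j by omega,
      toNat_sub_add_one_mul_sub h]
  · rw [if_neg h, coeffC_of_lt (by omega)]
end

section
/- For every integer n ≥ 0, the determinant over ℤ of the n×n matrix whose (i,j) entry is the residue of binom(i+j+1, 2j) modulo 2 (an element of {0,1} viewed as an integer; note binom(i+j+1, 2j) = binom(i+j+1, i-j+1)), 0 ≤ i, j ≤ n-1, equals the residue of the Catalan number C_n modulo 2 (an element of {0,1} viewed as an integer). -/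
open Finset

-- Lucas step mod 2
lemma lucas2 (N K : ℕ) :
    Nat.choose N K % 2 = (Nat.choose (N % 2) (K % 2) * Nat.choose (N / 2) (K / 2)) % 2 :=
  @Choose.choose_modEq_choose_mod_mul_choose_div_nat N K 2 ⟨Nat.prime_two⟩

-- catalan parity recursion
lemma catZ_odd (n : ℕ) (hn : n % 2 = 1) : (catalan (n+1) : ZMod 2) = 0 := by
  rw [catalan_succ, Nat.cast_sum]
  refine Finset.sum_involution (fun i _ => ⟨n - (i : ℕ), by omega⟩) ?_ ?_ (fun a ha => Finset.mem_univ _) ?_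
  · intro a _
    have h1 : n - (n - (a : ℕ)) = (a : ℕ) := by omega
    push_cast [h1]
    rw [mul_comm]
    exact CharTwo.add_self_eq_zero _
  · intro a _ _
    have : (a : ℕ) ≤ n := by omega
    intro h
    have := congrArg (fun x : Fin (n+1) => (x : ℕ)) h
    simp at this
    omega
  · intro a _
    apply Fin.ext
    simp
    omega

lemma catZ_even (t : ℕ) : (catalan (2*t+1) : ZMod 2) = (catalan t : ZMod 2) := by
  rw [catalan_succ, Nat.cast_sum]
  have ht : (⟨t, by omega⟩ : Fin (2*t+1)) ∈ (Finset.univ : Finset (Fin (2*t+1))) := Finset.mem_univ _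
  rw [← Finset.sum_erase_add _ _ ht]
  have h0 : ∑ x ∈ Finset.univ.erase (⟨t, by omega⟩ : Fin (2*t+1)),
      ((catalan (x:ℕ) * catalan (2*t - (x:ℕ)) : ℕ) : ZMod 2) = 0 := by
    refine Finset.sum_involution (fun i _ => ⟨2*t - (i : ℕ), by omega⟩) ?_ ?_ ?_ ?_
    · intro a _
      have h1 : 2*t - (2*t - (a : ℕ)) = (a : ℕ) := by omega
      push_cast [h1]
      rw [mul_comm]
      exact CharTwo.add_self_eq_zero _
    · intro a ha _
      have hat : (a : ℕ) ≠ t := by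
        intro h
        apply Finset.ne_of_mem_erase ha
        exact Fin.ext h
      intro h
      have := congrArg (fun x : Fin (2*t+1) => (x : ℕ)) h
      simp at this
      omega
    · intro a ha
      refine Finset.mem_erase.mpr ⟨?_, Finset.mem_univ _⟩
      have hat : (a : ℕ) ≠ t := by
        intro h
        apply Finset.ne_of_mem_erase ha
        exact Fin.ext h
      intro h
      have := congrArg (fun x : Fin (2*t+1) => (x : ℕ)) h
      simp at this
      omega
    · intro a _
      apply Fin.ext
      simp
      omega
  rw [h0, zero_add]
  have h2 : 2*t - t = t := by omega
  push_cast [h2]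
  have : ∀ x : ZMod 2, x * x = x := by decide
  exact this _

lemma cat_parity : ∀ k, ((catalan k : ZMod 2) = 1 ↔ ∃ j, k+1 = 2^j) := by
  intro k
  induction k using Nat.strong_induction_on with
  | _ k ih =>
    match k with
    | 0 => simp [catalan_zero]; exact ⟨0, rfl⟩
    | (n+1) =>
      rcases Nat.even_or_odd n with ⟨t, rfl⟩ | ⟨t, rfl⟩
      · rw [show t + t = 2*t from by omega, catZ_even t]
        rw [ih t (by omega)]
        constructor
        · rintro ⟨j, hj⟩
          exact ⟨j+1, by rw [pow_succ]; omega⟩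
        · rintro ⟨j, hj⟩
          match j with
          | 0 => omega
          | (j+1) => exact ⟨j, by rw [pow_succ] at hj; omega⟩
      · rw [catZ_odd (2*t+1) (by omega)]
        constructor
        · intro h; exact absurd h.symm one_ne_zero
        · rintro ⟨j, hj⟩
          exfalso
          match j with
          | 0 => omega
          | (j+1) =>
            have : 2 ∣ 2^(j+1) := dvd_pow_self 2 (Nat.succ_ne_zero j)
            omega

lemma Gpar : ∀ j x : ℕ, (Nat.choose x (2^j - 1) % 2 = 1 ↔ x % 2^j = 2^j - 1) := by
  intro j
  induction j with
  | zero => intro x; simp [Nat.mod_one]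
  | succ j ih =>
    intro x
    have h2 : (2:ℕ)^(j+1) = 2 * 2^j := by rw [pow_succ]; ring
    have hp : (1:ℕ) ≤ 2^j := Nat.one_le_two_pow
    have hK1 : (2^(j+1) - 1) % 2 = 1 := by omega
    have hK2 : (2^(j+1) - 1) / 2 = 2^j - 1 := by omega
    rw [lucas2, hK1, hK2]
    have hx2 : x % 2 = 0 ∨ x % 2 = 1 := by omega
    have hrec := ih (x / 2)
    have hmod : x % (2^(j+1)) = 2 * (x / 2 % 2^j) + x % 2 := by
      rw [h2, Nat.mod_mul]
      ring
    rcases hx2 with h | h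
    · rw [h]
      simp only [Nat.choose, Nat.zero_mul, Nat.zero_mod]
      constructor
      · omega
      · omega
    · rw [h]
      simp only [Nat.choose_self, Nat.one_mul]
      rw [hrec]
      omega

lemma bstep (j m : ℕ) :
    Nat.choose (m + (2^j - 1)) (2*(2^j - 1)) % 2
      = Nat.choose ((m + (2^j - 1))/2) (2^j - 1) % 2 := by
  rw [lucas2]
  have h1 : (2*(2^j - 1)) % 2 = 0 := by omega
  have h2 : (2*(2^j - 1)) / 2 = 2^j - 1 := by omega
  rw [h1, h2, Nat.choose_zero_right, Nat.one_mul]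

lemma lemB (d x : ℕ) (hd : 0 < d) : x % d = d - 1 ↔ d ∣ (x + 1) := by
  constructor
  · intro h
    have h1 := Nat.mod_add_div x d
    exact ⟨x / d + 1, by rw [Nat.mul_add, Nat.mul_one]; omega⟩
  · rintro ⟨q, hq⟩
    rcases q with _ | q'
    · omega
    · rw [Nat.mul_succ] at hq
      have hx : x = d * q' + (d - 1) := by omega
      rw [hx, Nat.mul_add_mod]
      exact Nat.mod_eq_of_lt (by omega)

lemma lemA (w i u : ℕ) (hu : Odd u) : (2^(i+1) ∣ 2^w * u + 2^i ↔ i = w) := by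
  obtain ⟨s, rfl⟩ := hu
  constructor
  · intro hdvd
    by_contra hne
    rcases Nat.lt_or_ge i w with h | h
    · -- i < w : 2^(i+1) ∣ 2^w * u, so 2^(i+1) ∣ 2^i, contradiction
      have h1 : (2:ℕ)^(i+1) ∣ 2^w * (2*s+1) := Dvd.dvd.mul_right (pow_dvd_pow 2 (by omega)) _
      have h2 : (2:ℕ)^(i+1) ∣ 2^i := (Nat.dvd_add_right h1).mp hdvd
      have h5 := Nat.le_of_dvd (by positivity) h2
      have h6 : (2:ℕ)^i < 2^(i+1) := Nat.pow_lt_pow_right (by norm_num) (by omega)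
      omega
    · -- w < i (since ≠): 2^(w+1) ∣ sum → 2^(w+1) ∣ 2^w*(2s+1) → 2 ∣ 2s+1
      have hwi : w < i := by omega
      have h1 : (2:ℕ)^(w+1) ∣ 2^w * (2*s+1) + 2^i := dvd_trans (pow_dvd_pow 2 (by omega)) hdvd
      have h2 : (2:ℕ)^(w+1) ∣ 2^i := pow_dvd_pow 2 (by omega)
      have h3 : (2:ℕ)^(w+1) ∣ 2^w * (2*s+1) := (Nat.dvd_add_iff_left h2).mpr h1
      have hpos : 0 < (2:ℕ)^w := by positivity
      rw [pow_succ] at h3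
      have h4 : (2:ℕ) ∣ 2*s+1 := (Nat.mul_dvd_mul_iff_left hpos).mp h3
      omega
  · rintro rfl
    exact ⟨s+1, by rw [pow_succ]; ring⟩

noncomputable def aent (r k : ℕ) : ℤ := ((Nat.choose (r + k + 1) (2 * k) % 2 : ℕ) : ℤ)

noncomputable def cpar (k : ℕ) : ℤ := ((catalan k % 2 : ℕ) : ℤ)

lemma cat_mod_eq_one_iff (k : ℕ) : catalan k % 2 = 1 ↔ ∃ j, k + 1 = 2^j := by
  rw [← cat_parity k]
  rcases Nat.mod_two_eq_zero_or_one (catalan k) with h2 | h2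
  · constructor
    · omega
    · intro h
      exfalso
      rw [← ZMod.natCast_mod, h2] at h
      exact absurd h (by decide)
  · constructor
    · intro _
      rw [← ZMod.natCast_mod, h2]
      exact Nat.cast_one
    · intro _; exact h2

lemma cpar_one {k : ℕ} (h : ∃ j, k + 1 = 2^j) : cpar k = 1 := by
  unfold cpar
  rw [(cat_mod_eq_one_iff k).mpr h]
  rfl

lemma cpar_zero {k : ℕ} (h : ¬∃ j, k + 1 = 2^j) : cpar k = 0 := by
  unfold cpar
  rcases Nat.mod_two_eq_zero_or_one (catalan k) with h2 | h2
  · rw [h2]; rfl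
  · exact absurd ((cat_mod_eq_one_iff k).mp h2) h

lemma apar (m v u j : ℕ) (hv : 1 ≤ v) (hj : 1 ≤ j) (hu : Odd u)
    (hm : m % 2 = 0 ∧ m = 2^v * u ∨ m % 2 = 1 ∧ m + 1 = 2^v * u) :
    Nat.choose (m + (2^j - 1)) (2*(2^j - 1)) % 2 = if j = v then 1 else 0 := by
  rw [bstep]
  obtain ⟨j', rfl⟩ : ∃ j', j = j' + 1 := ⟨j - 1, by omega⟩
  obtain ⟨v', rfl⟩ : ∃ v', v = v' + 1 := ⟨v - 1, by omega⟩
  have hQ : (2:ℕ)^(v'+1) * u = 2 * (2^v' * u) := by rw [pow_succ]; ring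
  have hJ : (2:ℕ)^(j'+1) = 2 * 2^j' := by rw [pow_succ]; ring
  have hj'pos : (1:ℕ) ≤ 2^j' := Nat.one_le_two_pow
  have harith : (m + (2^(j'+1) - 1))/2 + 1 = 2^v' * u + 2^j' := by
    rw [hQ] at hm; rw [hJ]; omega
  have hiff :
      Nat.choose ((m + (2^(j'+1) - 1))/2) (2^(j'+1) - 1) % 2 = 1 ↔ j' = v' := by
    rw [Gpar, lemB _ _ (by positivity), harith, lemA v' j' u hu]
  rcases Nat.mod_two_eq_zero_or_one
      (Nat.choose ((m + (2^(j'+1) - 1))/2) (2^(j'+1) - 1)) with h2 | h2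
  · rw [h2]
    have : ¬ (j' = v') := fun h => by rw [← hiff] at h; omega
    rw [if_neg (by omega)]
  · rw [h2]
    have : j' = v' := hiff.mp h2
    rw [if_pos (by omega)]

lemma pow2_eq_of_mul_odd {v u j : ℕ} (hu : Odd u) (h : 2^v * u = 2^j) : u = 1 := by
  have hdvd : u ∣ 2^j := ⟨2^v, by rw [← h]; ring⟩
  obtain ⟨i, _, rfl⟩ := (Nat.dvd_prime_pow Nat.prime_two).mp hdvd
  rcases i with _ | i'
  · rfl
  · exfalso
    rw [Nat.odd_iff, pow_succ, Nat.mul_mod_left] at hu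
    omega

lemma not_pow2_succ_of_even {m : ℕ} (hme : m % 2 = 0) (hm : 1 ≤ m) :
    ¬∃ j, m + 1 = 2^j := by
  rintro ⟨j, hj⟩
  rcases j with _ | j'
  · simp at hj; omega
  · rw [pow_succ] at hj; omega

lemma REC (m : ℕ) (hm : 1 ≤ m) :
    (∑ k ∈ Finset.range m, (-1:ℤ)^(m-1-k) * aent (m-1) k * cpar k) = cpar m := by
  have ha0 : aent (m-1) 0 = 1 := by simp [aent]
  have hc0 : cpar 0 = 1 := cpar_one ⟨0, by norm_num⟩
  rcases Nat.mod_two_eq_zero_or_one m with hme | hme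
  · -- m even
    obtain ⟨v, u, hu, hmu⟩ := Nat.exists_eq_two_pow_mul_odd (show m ≠ 0 by omega)
    have huodd := hu
    rw [Nat.odd_iff] at huodd
    have hv : 1 ≤ v := by
      rcases v with _ | v'
      · rw [pow_zero, one_mul] at hmu; omega
      · omega
    have h2v : (2:ℕ)^v = 2 * 2^(v-1) := by
      have h := pow_succ 2 (v-1)
      rw [Nat.sub_add_cancel hv] at h
      omega
    have hu1 : 1 ≤ u := by omega
    have hk₁m : 2^v ≤ m := by
      have hp : 0 < (2:ℕ)^v := by positivity
      nlinarith
    have hsub : ({0, 2^v - 1} : Finset ℕ) ⊆ Finset.range m := by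
      intro x hx
      rcases Finset.mem_insert.mp hx with h | h
      · exact Finset.mem_range.mpr (by omega)
      · rw [Finset.mem_singleton] at h
        exact Finset.mem_range.mpr (by omega)
    have hzero : ∀ k ∈ Finset.range m, k ∉ ({0, 2^v - 1} : Finset ℕ) →
        (-1:ℤ)^(m-1-k) * aent (m-1) k * cpar k = 0 := by
      intro k hk hks
      by_cases hex : ∃ j, k + 1 = 2^j
      · obtain ⟨j, hjk⟩ := hex
        have hk0 : k ≠ 0 := fun h => hks (by simp [h])
        have hj : 1 ≤ j := by
          rcases j with _ | j'
          · simp at hjk; omega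
          · omega
        have hjv : j ≠ v := fun h => hks (by
          rw [Finset.mem_insert, Finset.mem_singleton]
          right
          rw [← h]
          omega)
        have ha : aent (m-1) k = 0 := by
          unfold aent
          rw [show (m-1)+k+1 = m + (2^j - 1) from by omega,
              show 2*k = 2*(2^j - 1) from by omega,
              apar m v u j hv hj hu (Or.inl ⟨hme, hmu⟩), if_neg hjv]
          rfl
        rw [ha]; ring
      · rw [cpar_zero hex]; ring
    rw [← Finset.sum_subset hsub hzero]
    have hne : (0:ℕ) ≠ 2^v - 1 := by
        have := Nat.one_le_two_pow (n := v-1)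
        omega

    rw [Finset.sum_pair hne]
    have ht0 : (-1:ℤ)^(m-1-0) * aent (m-1) 0 * cpar 0 = -1 := by
      rw [ha0, hc0, Odd.neg_one_pow (by rw [Nat.odd_iff]; omega)]; ring
    have hak : aent (m-1) (2^v - 1) = 1 := by
      unfold aent
      rw [show (m-1)+(2^v-1)+1 = m + (2^v - 1) from by omega,
          show 2*(2^v-1) = 2*(2^v - 1) from rfl,
          apar m v u v hv hv hu (Or.inl ⟨hme, hmu⟩), if_pos rfl]
      rfl
    have htk : (-1:ℤ)^(m-1-(2^v-1)) * aent (m-1) (2^v-1) * cpar (2^v-1) = 1 := by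
      rw [hak, cpar_one ⟨v, by omega⟩,
          Even.neg_one_pow (by rw [Nat.even_iff]; omega)]
      ring
    rw [ht0, htk, cpar_zero (not_pow2_succ_of_even hme hm)]
    ring
  · -- m odd
    obtain ⟨v, u, hu, hmu⟩ := Nat.exists_eq_two_pow_mul_odd (show m + 1 ≠ 0 by omega)
    have huodd := hu
    rw [Nat.odd_iff] at huodd
    have hv : 1 ≤ v := by
      rcases v with _ | v'
      · rw [pow_zero, one_mul] at hmu; omega
      · omega
    have h2v : (2:ℕ)^v = 2 * 2^(v-1) := by
      have h := pow_succ 2 (v-1)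
      rw [Nat.sub_add_cancel hv] at h
      omega
    by_cases hu1 : u = 1
    · -- m + 1 = 2^v
      subst hu1
      rw [Nat.mul_one] at hmu
      have hsub : ({0} : Finset ℕ) ⊆ Finset.range m := by
        intro x hx
        rw [Finset.mem_singleton] at hx
        exact Finset.mem_range.mpr (by omega)
      have hzero : ∀ k ∈ Finset.range m, k ∉ ({0} : Finset ℕ) →
          (-1:ℤ)^(m-1-k) * aent (m-1) k * cpar k = 0 := by
        intro k hk hks
        rw [Finset.mem_range] at hk
        by_cases hex : ∃ j, k + 1 = 2^j
        · obtain ⟨j, hjk⟩ := hex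
          have hk0 : k ≠ 0 := fun h => hks (by simp [h])
          have hj : 1 ≤ j := by
            rcases j with _ | j'
            · simp at hjk; omega
            · omega
          have hjv : j ≠ v := by intro h; subst h; omega
          have ha : aent (m-1) k = 0 := by
            unfold aent
            rw [show (m-1)+k+1 = m + (2^j - 1) from by omega,
                show 2*k = 2*(2^j - 1) from by omega,
                apar m v 1 j hv hj hu (Or.inr ⟨hme, by omega⟩), if_neg hjv]
            rfl
          rw [ha]; ring
        · rw [cpar_zero hex]; ring
      rw [← Finset.sum_subset hsub hzero, Finset.sum_singleton]
      rw [ha0, hc0, Even.neg_one_pow (by rw [Nat.even_iff]; omega),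
          cpar_one ⟨v, hmu⟩]
      ring
    · -- u ≥ 3
      have hu3 : 3 ≤ u := by omega
      have hk₁m : 2^v ≤ m := by
        have hp : 0 < (2:ℕ)^v := by positivity
        nlinarith
      have hsub : ({0, 2^v - 1} : Finset ℕ) ⊆ Finset.range m := by
        intro x hx
        rcases Finset.mem_insert.mp hx with h | h
        · exact Finset.mem_range.mpr (by omega)
        · rw [Finset.mem_singleton] at h
          exact Finset.mem_range.mpr (by omega)
      have hzero : ∀ k ∈ Finset.range m, k ∉ ({0, 2^v - 1} : Finset ℕ) →
          (-1:ℤ)^(m-1-k) * aent (m-1) k * cpar k = 0 := by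
        intro k hk hks
        by_cases hex : ∃ j, k + 1 = 2^j
        · obtain ⟨j, hjk⟩ := hex
          have hk0 : k ≠ 0 := fun h => hks (by simp [h])
          have hj : 1 ≤ j := by
            rcases j with _ | j'
            · simp at hjk; omega
            · omega
          have hjv : j ≠ v := fun h => hks (by
            rw [Finset.mem_insert, Finset.mem_singleton]
            right
            rw [← h]
            omega)
          have ha : aent (m-1) k = 0 := by
            unfold aent
            rw [show (m-1)+k+1 = m + (2^j - 1) from by omega,
                show 2*k = 2*(2^j - 1) from by omega,
                apar m v u j hv hj hu (Or.inr ⟨hme, hmu⟩), if_neg hjv]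
            rfl
          rw [ha]; ring
        · rw [cpar_zero hex]; ring
      rw [← Finset.sum_subset hsub hzero]
      have hne : (0:ℕ) ≠ 2^v - 1 := by
        have := Nat.one_le_two_pow (n := v-1)
        omega

      rw [Finset.sum_pair hne]
      have ht0 : (-1:ℤ)^(m-1-0) * aent (m-1) 0 * cpar 0 = 1 := by
        rw [ha0, hc0, Even.neg_one_pow (by rw [Nat.even_iff]; omega)]; ring
      have hak : aent (m-1) (2^v - 1) = 1 := by
        have e1 : (m-1)+(2^v-1)+1 = m + (2^v - 1) := by omega
        unfold aent
        rw [e1, apar m v u v hv hv hu (Or.inr ⟨hme, hmu⟩), if_pos rfl]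
        rfl
      have htk : (-1:ℤ)^(m-1-(2^v-1)) * aent (m-1) (2^v-1) * cpar (2^v-1) = -1 := by
        rw [hak, cpar_one ⟨v, by omega⟩,
            Odd.neg_one_pow (by rw [Nat.odd_iff]; omega)]
        ring
      have hcm : cpar m = 0 := by
        apply cpar_zero
        rintro ⟨j, hj⟩
        exact hu1 (pow2_eq_of_mul_odd (v := v) (j := j) hu (by omega))
      rw [ht0, htk, hcm]
      ring

lemma aent_superdiag (i : ℕ) : aent i (i+1) = 1 := by
  unfold aent
  rw [show i + (i+1) + 1 = 2*(i+1) from by omega, Nat.choose_self]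
  rfl

lemma aent_zero {i j : ℕ} (h : i + 1 < j) : aent i j = 0 := by
  unfold aent
  rw [Nat.choose_eq_zero_of_lt (by omega)]
  rfl

noncomputable def MR (n r : ℕ) : Matrix (Fin n) (Fin n) ℤ :=
  Matrix.of fun i j => aent (if (i:ℕ) + 1 = n then r else (i:ℕ)) (j:ℕ)

lemma expand (n r : ℕ) :
    (MR (n+2) r).det = aent r (n+1) * (MR (n+1) n).det - (MR (n+1) r).det := by
  rw [Matrix.det_succ_column (MR (n+2) r) (Fin.last (n+1))]
  have i0lt : n < n + 2 := by omega
  set i0 : Fin (n+2) := ⟨n, i0lt⟩ with hi0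
  set i1 : Fin (n+2) := Fin.last (n+1) with hi1
  have hvanish : ∀ i ∈ (Finset.univ : Finset (Fin (n+2))),
      i ∉ ({i0, i1} : Finset (Fin (n+2))) →
      (-1:ℤ)^((i:ℕ) + ((Fin.last (n+1)):ℕ)) * (MR (n+2) r) i (Fin.last (n+1)) *
        ((MR (n+2) r).submatrix i.succAbove (Fin.last (n+1)).succAbove).det = 0 := by
    intro i _ hi
    have h0 : i ≠ i0 := fun h => hi (by simp [h])
    have h1 : i ≠ i1 := fun h => hi (by simp [h])
    have hv0 : (i:ℕ) ≠ n := fun h => h0 (Fin.ext h)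
    have hv1 : (i:ℕ) ≠ n+1 := fun h => h1 (Fin.ext h)
    have hlt : (i:ℕ) < n := by have := i.isLt; omega
    have hz : (MR (n+2) r) i (Fin.last (n+1)) = 0 := by
      show aent (if (i:ℕ) + 1 = n+2 then r else (i:ℕ)) ((Fin.last (n+1)):ℕ) = 0
      rw [if_neg (by omega), Fin.val_last]
      exact aent_zero (by omega)
    rw [hz]
    ring
  rw [← Finset.sum_subset (Finset.subset_univ ({i0, i1} : Finset (Fin (n+2)))) hvanish]
  have hne : i0 ≠ i1 := by
    intro h
    have := congrArg (fun x : Fin (n+2) => (x:ℕ)) h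
    simp [hi0, hi1] at this
  rw [Finset.sum_pair hne]
  -- compute i1 term
  have hsub1 : (MR (n+2) r).submatrix i1.succAbove (Fin.last (n+1)).succAbove
      = MR (n+1) n := by
    ext i j
    rw [hi1]
    simp only [Matrix.submatrix_apply, Fin.succAbove_last, MR, Matrix.of_apply,
      Fin.coe_castSucc]
    have hi' : (i:ℕ) < n+1 := i.isLt
    rw [if_neg (by omega)]
    by_cases h : (i:ℕ)+1 = n+1
    · rw [if_pos h, show (i:ℕ) = n from by omega]
    · rw [if_neg h]
  have he1 : (MR (n+2) r) i1 (Fin.last (n+1)) = aent r (n+1) := by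
    show aent (if ((i1:ℕ)) + 1 = n+2 then r else (i1:ℕ)) ((Fin.last (n+1)):ℕ) = _
    rw [hi1, Fin.val_last, if_pos rfl]
  -- compute i0 term
  have hco : ∀ i' : Fin (n+1),
      ((i0.succAbove i' : Fin (n+2)) : ℕ) = if (i':ℕ) < n then (i':ℕ) else (i':ℕ)+1 := by
    intro i'
    rw [Fin.succAbove]
    by_cases h : (i':ℕ) < n
    · rw [if_pos (show Fin.castSucc i' < i0 from by
        rw [Fin.lt_def]; simpa using h), if_pos h, Fin.coe_castSucc]
    · rw [if_neg (show ¬ Fin.castSucc i' < i0 from by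
        rw [Fin.lt_def]; simpa using h), if_neg h, Fin.val_succ]
  have hsub0 : (MR (n+2) r).submatrix i0.succAbove (Fin.last (n+1)).succAbove
      = MR (n+1) r := by
    ext i j
    simp only [Matrix.submatrix_apply, Fin.succAbove_last, MR, Matrix.of_apply,
      Fin.coe_castSucc]
    rw [hco i]
    have hi' : (i:ℕ) < n+1 := i.isLt
    by_cases h : (i:ℕ) < n
    · rw [if_pos h, if_neg (by omega), if_neg (by omega)]
    · rw [if_neg h, if_pos (by omega), if_pos (by omega)]
  have he0 : (MR (n+2) r) i0 (Fin.last (n+1)) = 1 := by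
    show aent (if ((i0:ℕ)) + 1 = n+2 then r else (i0:ℕ)) ((Fin.last (n+1)):ℕ) = 1
    rw [hi0]
    simp only [Fin.val_last]
    rw [if_neg (by omega)]
    exact aent_superdiag n
  rw [hsub1, he1, hsub0, he0]
  have hp0 : ((-1:ℤ))^((i0:ℕ) + ((Fin.last (n+1)):ℕ)) = -1 := by
    rw [hi0]
    simp only [Fin.val_last]
    exact Odd.neg_one_pow ⟨n, by omega⟩
  have hp1 : ((-1:ℤ))^((i1:ℕ) + ((Fin.last (n+1)):ℕ)) = 1 := by
    rw [hi1]
    simp only [Fin.val_last]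
    exact Even.neg_one_pow ⟨n+1, by omega⟩
  rw [hp0, hp1]
  ring

lemma mr_det (n : ℕ) : ∀ r, (MR (n+1) r).det
    = ∑ k ∈ Finset.range (n+1), (-1:ℤ)^(n-k) * aent r k * cpar k := by
  induction n with
  | zero =>
    intro r
    rw [Matrix.det_fin_one, Finset.sum_range_one]
    show aent (if ((0:Fin 1):ℕ) + 1 = 1 then r else _) ((0:Fin 1):ℕ) = _
    rw [show ((0:Fin 1):ℕ) = 0 from rfl, if_pos (by norm_num), cpar_one ⟨0, by norm_num⟩]
    simp
  | succ n ih =>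
    intro r
    rw [expand n r, ih r, ih n]
    have hrec := REC (n+1) (by omega)
    simp only [Nat.add_sub_cancel] at hrec
    rw [hrec]
    conv_rhs => rw [Finset.sum_range_succ]
    have hcongr : ∀ k ∈ Finset.range (n+1),
        (-1:ℤ)^(n+1-k) * aent r k * cpar k = -((-1:ℤ)^(n-k) * aent r k * cpar k) := by
      intro k hk
      rw [Finset.mem_range] at hk
      rw [show n+1-k = (n-k)+1 from by omega, pow_succ]
      ring
    rw [Finset.sum_congr rfl hcongr, Finset.sum_neg_distrib]
    simp only [Nat.sub_self, pow_zero]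
    ring

theorem stmt_19 (n : ℕ) :
    Matrix.det (Matrix.of fun i j : Fin n =>
        ((Nat.choose ((i : ℕ) + (j : ℕ) + 1) (2 * (j : ℕ)) % 2 : ℕ) : ℤ))
      = ((catalan n % 2 : ℕ) : ℤ) := by
  cases n with
  | zero =>
    rw [Matrix.det_fin_zero, catalan_zero]
    rfl
  | succ n =>
    have hM : (Matrix.of fun i j : Fin (n+1) =>
        ((Nat.choose ((i : ℕ) + (j : ℕ) + 1) (2 * (j : ℕ)) % 2 : ℕ) : ℤ)) = MR (n+1) n := by
      ext i j
      show _ = aent (if (i:ℕ) + 1 = n+1 then n else (i:ℕ)) (j:ℕ)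
      unfold aent
      simp only [Matrix.of_apply]
      by_cases h : (i:ℕ)+1 = n+1
      · rw [if_pos h, show (i:ℕ) = n from by omega]
      · rw [if_neg h]
    rw [hM, mr_det n n]
    have hrec := REC (n+1) (by omega)
    simp only [Nat.add_sub_cancel] at hrec
    rw [hrec]
    rfl
end
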